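/- Let A be a finite nonempty set of positive integers. For all n, d, e ∈ ℕ: if d ≥ fI(n) and e < fII(n), then W_A^$(n;d,e) = I. -/

import Mathlib

/-- Standard NIM winner for the one-pile subtraction game with move set `A`:
`nimW A n = true` means Player I (the player to move) wins with `n` stones;
`nimW A n = false` means Player II wins.  (For `A` consisting of positive
integers this is exactly: Player I wins iff some `a ∈ A` with `a ≤ n` moves to
a Player-II-win position `n - a`.) -/
def nimW (A : Finset ℕ) : ℕ → Bool
  | n =>
    decide (((A.filter fun a => 0 < a ∧ a ≤ n).attach.filter (fun a =>
      nimW A (n - a.1) = false)).Nonempty)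
decreasing_by
  all_goals
    have h := a.2
    simp only [Finset.mem_filter] at h
    omega

/-- NIM-with-cash winner: `nimWC A n d e = true` means the player to move,
having `d` dollars while the opponent has `e` dollars, wins with `n` stones
on the board.  The player to move wins iff there is `a ∈ A` with `a ≤ n`
and `a ≤ d` such that the resulting position `(n - a; e, d - a)` is a loss
for the (new) player to move. -/
def nimWC (A : Finset ℕ) : ℕ → ℕ → ℕ → Bool
  | n, d, e =>
    decide (((A.filter fun a => 0 < a ∧ a ≤ n ∧ a ≤ d).attach.filter (fun a =>
      nimWC A (n - a.1) e (d - a.1) = false)).Nonempty)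
decreasing_by
  all_goals
    have h := a.2
    simp only [Finset.mem_filter] at h
    omega

/-- `fpair A n = (fI A n, fII A n)`, defined by simultaneous recursion:
for `n < min A` both are `0`; otherwise `fII n = max { fI (n-a) : a ∈ A, a ≤ n }`
(so in particular `fII n = 0` when there is no legal move), and
`fI n = min { fII (n-a) + a : a ∈ A, a ≤ n, nimW A (n-a) = false }` if `nimW A n`,
while `fI n = min { fII (n-a) + a : a ∈ A, a ≤ n, fI (n-a) = fII n }` otherwise. -/
def fpair (A : Finset ℕ) : ℕ → ℕ × ℕ
  | n =>
    let opts := (A.filter fun a => 0 < a ∧ a ≤ n).attach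
    let fIIn := (opts.image fun a => (fpair A (n - a.1)).1).max.unbotD 0
    (if nimW A n then
        ((opts.filter fun a => nimW A (n - a.1) = false).image
          fun a => (fpair A (n - a.1)).2 + a.1).min.untopD 0
      else
        ((opts.filter fun a => (fpair A (n - a.1)).1 = fIIn).image
          fun a => (fpair A (n - a.1)).2 + a.1).min.untopD 0,
     fIIn)
decreasing_by
  all_goals
    have h := a.2
    simp only [Finset.mem_filter] at h
    omega

/-- `fI A n`: the least amount of money the player to move needs to win
(richness threshold for Player I), as defined in the paper. -/
def fI (A : Finset ℕ) (n : ℕ) : ℕ := (fpair A n).1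

/-- `fII A n`: the richness threshold for the player not moving (Player II). -/
def fII (A : Finset ℕ) (n : ℕ) : ℕ := (fpair A n).2

/-!
The thresholds are proved correct simultaneously by strong induction on `n`: the player to
move wins when `fI n ≤ d` and either `n` is a NIM win or `e < fII n`, and loses when
`fII n ≤ e` and either `n` is a NIM loss or `d < fI n`. To win, remove the `a` attaining the
minimum that defines `fI n`. In the losing case every move `a` hands the opponent
`e ≥ fII n ≥ fI (n - a)` dollars, and either `n - a` is a NIM win, or else `n` is one and then
`d - a < fI n - a ≤ fII (n - a)`.
-/

namespace Finset

variable {α : Type*} [LinearOrder α] {s : Finset α}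

theorem max_unbotD_eq_max' (hs : s.Nonempty) (b : α) : s.max.unbotD b = s.max' hs := by
  rw [← coe_max' hs, WithBot.unbotD_coe]

theorem min_untopD_eq_min' (hs : s.Nonempty) (b : α) : s.min.untopD b = s.min' hs := by
  rw [← coe_min' hs, WithTop.untopD_coe]

theorem le_max_unbotD {a : α} (ha : a ∈ s) (b : α) : a ≤ s.max.unbotD b := by
  rw [max_unbotD_eq_max' ⟨a, ha⟩]
  exact le_max' s a ha

theorem min_untopD_le {a : α} (ha : a ∈ s) (b : α) : s.min.untopD b ≤ a := by
  rw [min_untopD_eq_min' ⟨a, ha⟩]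
  exact min'_le s a ha

theorem max_unbotD_mem (hs : s.Nonempty) (b : α) : s.max.unbotD b ∈ s := by
  rw [max_unbotD_eq_max' hs]
  exact max'_mem s hs

theorem min_untopD_mem (hs : s.Nonempty) (b : α) : s.min.untopD b ∈ s := by
  rw [min_untopD_eq_min' hs]
  exact min'_mem s hs

end Finset

section Thresholds

variable (A : Finset ℕ) {n : ℕ}

def legalMoves (n : ℕ) : Finset ℕ := A.filter fun a => 0 < a ∧ a ≤ n

variable {A} in
@[simp]
theorem mem_legalMoves {a : ℕ} : a ∈ legalMoves A n ↔ a ∈ A ∧ 0 < a ∧ a ≤ n :=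
  Finset.mem_filter

theorem nimW_eq_true_iff (n : ℕ) :
    nimW A n = true ↔ ∃ a ∈ legalMoves A n, nimW A (n - a) = false := by
  rw [nimW]
  simp [Finset.filter_nonempty_iff, and_assoc]

theorem nimWC_eq_true_iff (n d e : ℕ) :
    nimWC A n d e = true ↔
      ∃ a ∈ legalMoves A n, a ≤ d ∧ nimWC A (n - a) e (d - a) = false := by
  rw [nimWC]
  simp [Finset.filter_nonempty_iff, and_assoc]

theorem fII_eq_max_fpair (n : ℕ) : fII A n =
    ((A.filter fun a => 0 < a ∧ a ≤ n).attach.image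
      fun a => (fpair A (n - a.1)).1).max.unbotD 0 := by
  rw [fII, fpair]

theorem fII_eq (n : ℕ) : fII A n =
    ((legalMoves A n).image fun a => fI A (n - a)).max.unbotD 0 := by
  rw [fII_eq_max_fpair]
  congr 2
  ext x
  simp [fI]

theorem fI_eq_of_nimW_eq_true (h : nimW A n = true) : fI A n =
    (((legalMoves A n).filter fun a => nimW A (n - a) = false).image
      fun a => fII A (n - a) + a).min.untopD 0 := by
  rw [fI, fpair]
  simp only [h, if_true]
  congr 2
  ext x
  simp only [Finset.mem_image, Finset.mem_filter, Finset.mem_attach, true_and, Subtype.exists,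
    exists_prop, and_assoc, mem_legalMoves]
  rfl

theorem fI_eq_of_nimW_eq_false (h : nimW A n = false) : fI A n =
    (((legalMoves A n).filter fun a => fI A (n - a) = fII A n).image
      fun a => fII A (n - a) + a).min.untopD 0 := by
  rw [fI, fpair]
  simp only [h, Bool.false_eq_true, if_false]
  congr 2
  ext x
  simp only [Finset.mem_image, Finset.mem_filter, Finset.mem_attach, true_and, Subtype.exists,
    exists_prop, and_assoc, mem_legalMoves]
  rw [← fII_eq_max_fpair]
  rfl

variable {A}

theorem fI_sub_le_fII {a : ℕ} (ha : a ∈ legalMoves A n) : fI A (n - a) ≤ fII A n := by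
  rw [fII_eq]
  exact Finset.le_max_unbotD (Finset.mem_image_of_mem (fun a => fI A (n - a)) ha) 0

theorem exists_fI_sub_eq_fII (h : 0 < fII A n) :
    ∃ a ∈ legalMoves A n, fI A (n - a) = fII A n := by
  rw [fII_eq] at h ⊢
  obtain hs | hs := ((legalMoves A n).image fun a => fI A (n - a)).eq_empty_or_nonempty
  · simp [hs] at h
  exact Finset.mem_image.mp (Finset.max_unbotD_mem hs 0)

theorem fI_le_of_nimW_eq_true (h : nimW A n = true) {a : ℕ} (ha : a ∈ legalMoves A n)
    (hw : nimW A (n - a) = false) : fI A n ≤ fII A (n - a) + a := by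
  have ha' : a ∈ (legalMoves A n).filter fun a => nimW A (n - a) = false :=
    Finset.mem_filter.mpr ⟨ha, hw⟩
  rw [fI_eq_of_nimW_eq_true A h]
  exact Finset.min_untopD_le (Finset.mem_image_of_mem _ ha') 0

theorem exists_fII_add_eq_fI_of_nimW_eq_true (h : nimW A n = true) :
    ∃ a ∈ legalMoves A n, nimW A (n - a) = false ∧ fII A (n - a) + a = fI A n := by
  obtain ⟨b, hb, hwb⟩ := (nimW_eq_true_iff A n).mp h
  have hb' : b ∈ (legalMoves A n).filter fun a => nimW A (n - a) = false :=
    Finset.mem_filter.mpr ⟨hb, hwb⟩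
  rw [fI_eq_of_nimW_eq_true A h]
  obtain ⟨a, ha, hfa⟩ := Finset.mem_image.mp
    (Finset.min_untopD_mem ⟨_, Finset.mem_image_of_mem (fun a => fII A (n - a) + a) hb'⟩ 0)
  obtain ⟨ha, hwa⟩ := Finset.mem_filter.mp ha
  exact ⟨a, ha, hwa, hfa⟩

theorem exists_fII_add_eq_fI_of_nimW_eq_false (h : nimW A n = false) (hII : 0 < fII A n) :
    ∃ a ∈ legalMoves A n, fI A (n - a) = fII A n ∧ fII A (n - a) + a = fI A n := by
  obtain ⟨b, hb, hfb⟩ := exists_fI_sub_eq_fII hII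
  have hb' : b ∈ (legalMoves A n).filter fun a => fI A (n - a) = fII A n :=
    Finset.mem_filter.mpr ⟨hb, hfb⟩
  rw [fI_eq_of_nimW_eq_false A h]
  obtain ⟨a, ha, hfa⟩ := Finset.mem_image.mp
    (Finset.min_untopD_mem ⟨_, Finset.mem_image_of_mem (fun a => fII A (n - a) + a) hb'⟩ 0)
  obtain ⟨ha, hfIa⟩ := Finset.mem_filter.mp ha
  exact ⟨a, ha, hfIa, hfa⟩

variable (A) in
def ThresholdsDecide (n : ℕ) : Prop :=
  ∀ d e, (fI A n ≤ d → (nimW A n = true ∨ e < fII A n) → nimWC A n d e = true) ∧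
    (fII A n ≤ e → (nimW A n = false ∨ d < fI A n) → nimWC A n d e = false)

theorem nimWC_eq_true_of_thresholdsDecide_lt (IH : ∀ m < n, ThresholdsDecide A m) {d e : ℕ}
    (hd : fI A n ≤ d) (h : nimW A n = true ∨ e < fII A n) : nimWC A n d e = true := by
  obtain ⟨a, ha, hnext, hfI⟩ : ∃ a ∈ legalMoves A n,
      (nimW A (n - a) = false ∨ e < fI A (n - a)) ∧ fII A (n - a) + a = fI A n := by
    cases hW : nimW A n
    · have hII : e < fII A n := by simpa [hW] using h
      obtain ⟨a, ha, hfI, hfII⟩ := exists_fII_add_eq_fI_of_nimW_eq_false hW (by omega)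
      exact ⟨a, ha, Or.inr (by omega), hfII⟩
    · obtain ⟨a, ha, hw, hfII⟩ := exists_fII_add_eq_fI_of_nimW_eq_true hW
      exact ⟨a, ha, Or.inl hw, hfII⟩
  obtain ⟨-, ha0, han⟩ := mem_legalMoves.mp ha
  exact (nimWC_eq_true_iff A n d e).mpr
    ⟨a, ha, by omega, (IH (n - a) (by omega) e (d - a)).2 (by omega) hnext⟩

theorem nimWC_eq_false_of_thresholdsDecide_lt (IH : ∀ m < n, ThresholdsDecide A m) {d e : ℕ}
    (he : fII A n ≤ e) (h : nimW A n = false ∨ d < fI A n) : nimWC A n d e = false := by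
  rw [Bool.eq_false_iff]
  intro hwin
  obtain ⟨a, ha, had, hlose⟩ := (nimWC_eq_true_iff A n d e).mp hwin
  have hnext : nimW A (n - a) = true ∨ d - a < fII A (n - a) := by
    cases hW : nimW A (n - a)
    · have hWn : nimW A n = true := (nimW_eq_true_iff A n).mpr ⟨a, ha, hW⟩
      have hd : d < fI A n := by simpa [hWn] using h
      have hfI := fI_le_of_nimW_eq_true hWn ha hW
      exact Or.inr (by omega)
    · exact Or.inl rfl
  obtain ⟨-, ha0, han⟩ := mem_legalMoves.mp ha
  have hwin' := (IH (n - a) (by omega) e (d - a)).1 ((fI_sub_le_fII ha).trans he) hnext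
  simp [hwin'] at hlose

theorem thresholdsDecide (n : ℕ) : ThresholdsDecide A n := by
  induction n using Nat.strong_induction_on with
  | _ n IH =>
    exact fun d e => ⟨nimWC_eq_true_of_thresholdsDecide_lt IH,
      nimWC_eq_false_of_thresholdsDecide_lt IH⟩

end Thresholds

theorem nimWC_rich_I_general (A : Finset ℕ)
    (n d e : ℕ) (hd : fI A n ≤ d) (he : e < fII A n) :
    nimWC A n d e = true :=
  (thresholdsDecide n d e).1 hd (Or.inr he)

/-- If the player to move has at least `fI n` dollars and the
opponent has fewer than `fII n` dollars, the player to move wins NIM with cash. -/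
theorem nimWC_rich_I (A : Finset ℕ) (hA : A.Nonempty) (hpos : ∀ a ∈ A, 0 < a)
    (n d e : ℕ) (hd : fI A n ≤ d) (he : e < fII A n) :
    nimWC A n d e = true :=
  nimWC_rich_I_general A n d e hd he
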